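/- arXiv:2504.10740 — 3 statements merged into one kernel-verified Lean document; each statement's English description precedes it below -/
import Mathlib

section
/- Let q > 1. There exists a constant C_q > 0 such that for every ε ∈ (0,1] and all reals a, b with 0 ≤ a, b ≤ 1, one has a^q ≥ b^q − (1 + C_q ε) ε^{1−q} |a − b|^q − C_q ε a^q. -/
lemma key_convex (q : ℝ) (hq : 1 < q) {ε a t : ℝ} (hε : 0 < ε) (ha : 0 ≤ a) (ht : 0 ≤ t) :
    (a + t) ^ q ≤ (1 + ε) ^ (q - 1) * (a ^ q + ε ^ (1 - q) * t ^ q) := by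
  have h1ε : (0:ℝ) < 1 + ε := by linarith
  have h := (convexOn_rpow hq.le).2
      (show (1 + ε) * a ∈ Set.Ici (0:ℝ) from Set.mem_Ici.2 (by positivity))
      (show (1 + ε) / ε * t ∈ Set.Ici (0:ℝ) from Set.mem_Ici.2 (by positivity))
      (show (0:ℝ) ≤ 1 / (1 + ε) by positivity)
      (show (0:ℝ) ≤ ε / (1 + ε) by positivity)
      (show 1 / (1 + ε) + ε / (1 + ε) = 1 by field_simp)
  simp only [smul_eq_mul] at h
  have e1 : 1 / (1 + ε) * ((1 + ε) * a) + ε / (1 + ε) * ((1 + ε) / ε * t) = a + t := by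
    field_simp
  rw [e1] at h
  refine h.trans_eq ?_
  rw [Real.mul_rpow h1ε.le ha, Real.mul_rpow (by positivity) ht,
    Real.div_rpow h1ε.le hε.le]
  have hεq : ε ^ (1 - q) = ε / ε ^ q := by
    rw [Real.rpow_sub hε, Real.rpow_one]
  have h1εq : (1 + ε) ^ (q - 1) = (1 + ε) ^ q / (1 + ε) := by
    rw [Real.rpow_sub h1ε, Real.rpow_one]
  rw [hεq, h1εq]
  have hεqpos : (0:ℝ) < ε ^ q := Real.rpow_pos_of_pos hε q
  field_simp

lemma exp_bound (q ε : ℝ) (hq : 1 < q) (hε : 0 < ε) (hε1 : ε ≤ 1) :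
    (1 + ε) ^ (q - 1) ≤ 1 + (q - 1) * Real.exp (q - 1) * ε := by
  have h1ε : (0:ℝ) < 1 + ε := by linarith
  have hlog : Real.log (1 + ε) ≤ ε := by
    have := Real.log_le_sub_one_of_pos h1ε
    linarith
  have h1 : (1 + ε) ^ (q - 1) = Real.exp (Real.log (1 + ε) * (q - 1)) := by
    rw [Real.rpow_def_of_pos h1ε]
  have h2 : Real.exp (Real.log (1 + ε) * (q - 1)) ≤ Real.exp ((q - 1) * ε) :=
    Real.exp_le_exp.2 (by nlinarith)
  have h3 : Real.exp ((q - 1) * ε) ≤ 1 + (q - 1) * ε * Real.exp ((q - 1) * ε) := by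
    have hpos : 0 < Real.exp ((q - 1) * ε) := Real.exp_pos _
    have h := Real.add_one_le_exp (-((q - 1) * ε))
    rw [Real.exp_neg] at h
    have h' := mul_le_mul_of_nonneg_right h hpos.le
    rw [inv_mul_cancel₀ hpos.ne'] at h'
    nlinarith
  have h4 : Real.exp ((q - 1) * ε) ≤ Real.exp (q - 1) :=
    Real.exp_le_exp.2 (by nlinarith)
  have hq1 : 0 ≤ q - 1 := by linarith
  calc (1 + ε) ^ (q - 1) ≤ 1 + (q - 1) * ε * Real.exp ((q - 1) * ε) := by
        rw [h1]; exact h2.trans h3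
    _ ≤ 1 + (q - 1) * Real.exp (q - 1) * ε := by
        nlinarith [mul_le_mul_of_nonneg_left h4 (mul_nonneg hq1 hε.le)]

theorem stmt_6 (q : ℝ) (hq : 1 < q) :
    ∃ Cq > 0, ∀ ε ∈ Set.Ioc (0:ℝ) 1, ∀ a b : ℝ,
      0 ≤ a → a ≤ 1 → 0 ≤ b → b ≤ 1 →
      a ^ q ≥ b ^ q - (1 + Cq * ε) * ε ^ (1 - q) * |a - b| ^ q - Cq * ε * a ^ q := by
  refine ⟨(q - 1) * Real.exp (q - 1), mul_pos (by linarith) (Real.exp_pos _), ?_⟩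
  rintro ε ⟨hε, hε1⟩ a b ha ha1 hb hb1
  set Cq := (q - 1) * Real.exp (q - 1) with hCq
  have hCpos : 0 < Cq := mul_pos (by linarith) (Real.exp_pos _)
  have habs : (0:ℝ) ≤ |a - b| ^ q := Real.rpow_nonneg (abs_nonneg _) q
  have hεq : (0:ℝ) < ε ^ (1 - q) := Real.rpow_pos_of_pos hε _
  have haq : (0:ℝ) ≤ a ^ q := Real.rpow_nonneg ha q
  rcases le_total b a with hba | hab
  · have : b ^ q ≤ a ^ q := Real.rpow_le_rpow hb hba (by linarith)
    nlinarith [mul_nonneg hCpos.le hε.le,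
      mul_nonneg (mul_nonneg (by nlinarith : (0:ℝ) ≤ 1 + Cq * ε) hεq.le) habs,
      mul_nonneg (mul_nonneg hCpos.le hε.le) haq]
  · have ht : 0 ≤ b - a := by linarith
    have hkey := key_convex q hq hε ha ht
    rw [show a + (b - a) = b by ring] at hkey
    have hK := exp_bound q ε hq hε hε1
    rw [← hCq] at hK
    have habs' : |a - b| = b - a := by rw [abs_sub_comm]; exact abs_of_nonneg ht
    rw [habs']
    have htq : (0:ℝ) ≤ (b - a) ^ q := Real.rpow_nonneg ht q
    have hKpos : (0:ℝ) ≤ (1 + ε) ^ (q - 1) := Real.rpow_nonneg (by linarith) _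
    nlinarith [mul_le_mul_of_nonneg_right hK (by positivity : (0:ℝ) ≤ a ^ q + ε ^ (1 - q) * (b - a) ^ q),
      mul_nonneg hεq.le htq, mul_nonneg (mul_nonneg hCpos.le hε.le) (mul_nonneg hεq.le htq)]
end

section
/- Let l ≥ 2, k ≥ 0, and u, v ∈ ℝ with u ≥ v. Write w₊(t) = max(t − k, 0). Then for any nonneg reals A, B (playing the roles of ξ(x)^q and ξ(x+he_i)^q), |u − v|^{l−2}(u − v)(w₊(u)·A − w₊(v)·B) ≥ (w₊(u) − w₊(v))^{l−1}(w₊(u)·A − w₊(v)·B). -/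
theorem stmt_7 (l k u v A B : ℝ) (hl : 2 ≤ l) (hk : 0 ≤ k) (huv : v ≤ u)
    (hA : 0 ≤ A) (hB : 0 ≤ B) :
    |u - v| ^ (l - 2) * (u - v) * (max (u - k) 0 * A - max (v - k) 0 * B) ≥
      (max (u - k) 0 - max (v - k) 0) ^ (l - 1) *
        (max (u - k) 0 * A - max (v - k) 0 * B) := by
  rcases eq_or_lt_of_le huv with heq | hlt
  · subst heq
    have h1 : (max (v - k) 0 - max (v - k) 0 : ℝ) = 0 := by ring
    rw [h1, Real.zero_rpow (by linarith : l - 1 ≠ 0)]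
    simp
  · have hpos : 0 < u - v := by linarith
    have hP : |u - v| ^ (l - 2) * (u - v) = (u - v) ^ (l - 1) := by
      rw [abs_of_pos hpos]
      rw [← Real.rpow_add_one (ne_of_gt hpos)]
      ring_nf
    rw [hP]
    by_cases hv : v ≤ k
    · have hwv : max (v - k) 0 = 0 := max_eq_right (by linarith)
      rw [hwv]
      have hD : 0 ≤ max (u - k) 0 * A - 0 * B := by
        have := le_max_right (u - k) (0:ℝ)
        nlinarith
      have hQle : (max (u - k) 0 - 0) ^ (l - 1) ≤ (u - v) ^ (l - 1) := by
        apply Real.rpow_le_rpow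
        · simp
        · have := max_le (by linarith : u - k ≤ u - v) (le_of_lt hpos)
          simpa using this
        · linarith
      exact mul_le_mul_of_nonneg_right hQle hD
    · push_neg at hv
      have h1 : max (u - k) 0 = u - k := max_eq_left (by linarith)
      have h2 : max (v - k) 0 = v - k := max_eq_left (by linarith)
      rw [h1, h2]
      have : u - k - (v - k) = u - v := by ring
      rw [this]
end

section
/- Let Ω ⊂ ℝ^N be measurable with 0 < |Ω| < ∞, let 1 < p ≤ q, let ‖a‖ ≥ 0, and let u ∈ L^q(Ω). Denote by (u)_Ω the average of u over Ω and let S = supp u ⊂ Ω. Then |(u)_Ω|^p + ‖a‖ |(u)_Ω|^q ≤ (|S|/|Ω|)^{p−1} · (1/|Ω|) ∫_Ω (|u|^p + ‖a‖ |u|^q) dx. -/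
open MeasureTheory Set Function

/-!
Hölder's inequality on the support `S` of `u`, against the constant `1`, gives
`|∫ u|^r ≤ |S|^(r-1) ∫ |u|^r`; dividing by `|Ω|^r` turns this into the averaged bound with the
factor `(|S|/|Ω|)^(r-1)`. Applying it with `r = p` and `r = q`, the `q`-term is brought to the
factor of the `p`-term because `|S|/|Ω| ≤ 1` and `q - 1 ≥ p - 1`.
-/

theorem abs_inv_mul_rpow_le_of_abs_rpow_le {m s I J r : ℝ} (hr : r ≠ 0) (hm : 0 ≤ m)
    (hs : 0 ≤ s) (h : |I| ^ r ≤ s ^ (r - 1) * J) :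
    |m⁻¹ * I| ^ r ≤ (s / m) ^ (r - 1) * (m⁻¹ * J) := by
  have hmr : m ^ r = m ^ (r - 1) * m := by
    conv_lhs => rw [← sub_add_cancel r 1, Real.rpow_add' hm (by simpa using hr), Real.rpow_one]
  calc |m⁻¹ * I| ^ r = (m ^ r)⁻¹ * |I| ^ r := by
        rw [abs_mul, abs_inv, abs_of_nonneg hm, Real.mul_rpow (by positivity) (abs_nonneg I),
          Real.inv_rpow hm]
    _ ≤ (m ^ r)⁻¹ * (s ^ (r - 1) * J) := by gcongr
    _ = (s / m) ^ (r - 1) * (m⁻¹ * J) := by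
        rw [Real.div_rpow hs hm, hmr]
        ring

section

variable {α : Type*} [MeasurableSpace α] {μ : Measure α} {u : α → ℝ}

theorem integral_abs_le_rpow_mul_measureReal_support {r r' : ℝ}
    (hrr' : r.HolderConjugate r') (hS : μ (support u) ≠ ⊤) (hu : MemLp u (ENNReal.ofReal r) μ) :
    ∫ x, |u x| ∂μ ≤ (∫ x, |u x| ^ r ∂μ) ^ (1 / r) * μ.real (support u) ^ (1 / r') := by
  have : IsFiniteMeasure (μ.restrict (support u)) := isFiniteMeasure_restrict.mpr hS
  have on_support {f : ℝ → ℝ} (hf : f 0 = 0) : ∫ x in support u, f |u x| ∂μ = ∫ x, f |u x| ∂μ :=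
    setIntegral_eq_integral_of_forall_compl_eq_zero fun x hx => by
      rw [notMem_support.mp hx, abs_zero, hf]
  have holder := integral_mul_le_Lp_mul_Lq_of_nonneg (μ := μ.restrict (support u)) hrr'
    (ae_of_all _ fun x => abs_nonneg (u x)) (ae_of_all _ fun _ => zero_le_one)
    (hu.abs.restrict _) (memLp_const 1)
  simpa only [mul_one, Real.one_rpow, integral_const, smul_eq_mul,
    measureReal_restrict_apply_univ, on_support (f := fun t => t) rfl,
    on_support (f := (· ^ r)) (Real.zero_rpow hrr'.ne_zero)] using holder

theorem abs_integral_rpow_le_measureReal_support_rpow_mul {r : ℝ} (hr : 1 < r)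
    (hS : μ (support u) ≠ ⊤) (hu : Integrable u μ) (hur : Integrable (fun x => |u x| ^ r) μ) :
    |∫ x, u x ∂μ| ^ r ≤ μ.real (support u) ^ (r - 1) * ∫ x, |u x| ^ r ∂μ := by
  have hr0 : 0 < r := zero_lt_one.trans hr
  have hrr' := Real.HolderConjugate.conjExponent hr
  have hmem : MemLp u (ENNReal.ofReal r) μ := by
    rw [← integrable_norm_rpow_iff hu.aestronglyMeasurable (by simpa using hr0)
      ENNReal.ofReal_ne_top]
    simpa only [Real.norm_eq_abs, ENNReal.toReal_ofReal hr0.le] using hur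
  have hI : 0 ≤ ∫ x, |u x| ^ r ∂μ := integral_nonneg fun x => by positivity
  have hs : 0 ≤ μ.real (support u) := measureReal_nonneg
  calc |∫ x, u x ∂μ| ^ r
      ≤ ((∫ x, |u x| ^ r ∂μ) ^ (1 / r) * μ.real (support u) ^ (1 / r.conjExponent)) ^ r :=
        Real.rpow_le_rpow (abs_nonneg _)
          (abs_integral_le_integral_abs.trans
            (integral_abs_le_rpow_mul_measureReal_support hrr' hS hmem)) hr0.le
    _ = μ.real (support u) ^ (r - 1) * ∫ x, |u x| ^ r ∂μ := by
        rw [Real.mul_rpow (by positivity) (by positivity), ← Real.rpow_mul hI,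
          ← Real.rpow_mul hs, one_div_mul_cancel hr0.ne', Real.rpow_one, one_div, inv_mul_eq_div,
          hrr'.div_conj_eq_sub_one, mul_comm]

theorem mul_abs_average_rpow_le {r c : ℝ} (hr : 1 < r) (hc : 0 ≤ c) (hS : μ (support u) ≠ ⊤)
    (hu : Integrable u μ) (hcur : Integrable (fun x => c * |u x| ^ r) μ) :
    c * |(μ.real univ)⁻¹ * ∫ x, u x ∂μ| ^ r ≤
      (μ.real (support u) / μ.real univ) ^ (r - 1) *
        ((μ.real univ)⁻¹ * ∫ x, c * |u x| ^ r ∂μ) := by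
  obtain rfl | hc := hc.eq_or_lt
  · simp
  have hur : Integrable (fun x => |u x| ^ r) μ := by
    simpa only [inv_mul_cancel_left₀ hc.ne'] using hcur.const_mul c⁻¹
  have key := abs_inv_mul_rpow_le_of_abs_rpow_le (m := μ.real univ) (by positivity)
    measureReal_nonneg measureReal_nonneg
    (abs_integral_rpow_le_measureReal_support_rpow_mul hr hS hu hur)
  rw [integral_const_mul]
  calc c * |(μ.real univ)⁻¹ * ∫ x, u x ∂μ| ^ r
      ≤ c * ((μ.real (support u) / μ.real univ) ^ (r - 1) *
        ((μ.real univ)⁻¹ * ∫ x, |u x| ^ r ∂μ)) := by gcongr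
    _ = _ := by ring

end

theorem stmt_13_general (N : ℕ) (Ω : Set (Fin N → ℝ)) (hΩfin : volume Ω < ⊤)
    (p q A : ℝ) (hp : 1 < p) (hpq : p ≤ q) (hA : 0 ≤ A)
    (u : (Fin N → ℝ) → ℝ) (hsupp : Function.support u ⊆ Ω)
    (hu : IntegrableOn u Ω)
    (hint : IntegrableOn (fun x => |u x| ^ p + A * |u x| ^ q) Ω) :
    |(volume Ω).toReal⁻¹ * ∫ x in Ω, u x| ^ p +
        A * |(volume Ω).toReal⁻¹ * ∫ x in Ω, u x| ^ q ≤
      ((volume (Function.support u)).toReal / (volume Ω).toReal) ^ (p - 1) *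
        ((volume Ω).toReal⁻¹ * ∫ x in Ω, (|u x| ^ p + A * |u x| ^ q)) := by
  have hS : volume.restrict Ω (support u) = volume (support u) :=
    Measure.restrict_eq_self _ hsupp
  have hSfin : volume.restrict Ω (support u) ≠ ⊤ :=
    hS ▸ (measure_mono hsupp).trans_lt hΩfin |>.ne
  have hm : (volume.restrict Ω).real univ = (volume Ω).toReal := measureReal_restrict_apply_univ Ω
  have hs : (volume.restrict Ω).real (support u) = (volume (support u)).toReal := by
    rw [Measure.real, hS]
  obtain ⟨hup, huq⟩ := (integrable_add_iff_of_nonneg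
    (hu.aemeasurable.abs.pow_const p).aestronglyMeasurable (ae_of_all _ fun x => by positivity)
    (ae_of_all _ fun x => by positivity)).mp hint
  have p_term := mul_abs_average_rpow_le hp zero_le_one hSfin hu
    (by simpa only [one_mul] using hup)
  have q_term := mul_abs_average_rpow_le (hp.trans_le hpq) hA hSfin hu huq
  rw [hm, hs] at p_term q_term
  simp only [one_mul] at p_term
  set ρ := (volume (support u)).toReal / (volume Ω).toReal
  have hρ : ρ ≤ 1 :=
    div_le_one_of_le₀ (ENNReal.toReal_mono hΩfin.ne (measure_mono hsupp)) ENNReal.toReal_nonneg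
  have hmono : ρ ^ (q - 1) ≤ ρ ^ (p - 1) :=
    Real.rpow_le_rpow_of_exponent_ge' (by positivity) hρ (by linarith) (by linarith)
  calc _ ≤ ρ ^ (p - 1) * ((volume Ω).toReal⁻¹ * ∫ x in Ω, |u x| ^ p) +
        ρ ^ (p - 1) * ((volume Ω).toReal⁻¹ * ∫ x in Ω, A * |u x| ^ q) :=
        add_le_add p_term (q_term.trans (mul_le_mul_of_nonneg_right hmono (by positivity)))
    _ = _ := by rw [integral_add hup huq]; ring

theorem stmt_13 (N : ℕ) (Ω : Set (Fin N → ℝ)) (hΩ : MeasurableSet Ω)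
    (hΩ0 : 0 < volume Ω) (hΩfin : volume Ω < ⊤)
    (p q A : ℝ) (hp : 1 < p) (hpq : p ≤ q) (hA : 0 ≤ A)
    (u : (Fin N → ℝ) → ℝ) (hsupp : Function.support u ⊆ Ω)
    (hu : IntegrableOn u Ω)
    (hint : IntegrableOn (fun x => |u x| ^ p + A * |u x| ^ q) Ω) :
    |(volume Ω).toReal⁻¹ * ∫ x in Ω, u x| ^ p +
        A * |(volume Ω).toReal⁻¹ * ∫ x in Ω, u x| ^ q ≤
      ((volume (Function.support u)).toReal / (volume Ω).toReal) ^ (p - 1) *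
        ((volume Ω).toReal⁻¹ * ∫ x in Ω, (|u x| ^ p + A * |u x| ^ q)) :=
  stmt_13_general N Ω hΩfin p q A hp hpq hA u hsupp hu hint
end
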